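/- Let J_n be the cylinder of α ∈ (0,1] whose first n Σ-entries equal a fixed admissible sequence σ_1,…,σ_n, and let J_{n+1}[s·t^ζ] ⊂ J_n be the subcylinder where additionally the (n+1)-st Σ-entry equals (s,(t,ζ)). Then the ratio of Lebesgue measures satisfies 1/(30 (s+1)² t²) ≤ |J_{n+1}[s·t^ζ]| / |J_n| ≤ 6/((s+1)² t²). -/

import Mathlib

/-!
The ECF inverse branches along a digit word `L = (k₁, ε₁) ⋯ (kₙ, εₙ)` compose to
`y ↦ 1 / (2k₁ + ε₁ / (2k₂ + ⋯ + εₙ y))`, the Möbius map of the product of the matrices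
`!![0, 1; ε, 2k]`. The cylinder of `L` is the image of `[0, 1]` under this map up to endpoints,
and as the matrix has determinant `±1` its length is `1 / (q (p + q))`, where `(p, q)` is the
bottom row. Appending the Σ-block `(s, (t, ζ))` maps `(p, q)` to
`(ζ A, (2t - 1) A + p + q)` with `A = s (p + q) + q`. Admissibility keeps `-q ≤ 3p ≤ 3q` at the end
of every Σ-block, and under this constraint `q' (p' + q')` is comparable to `(s + 1)² t² q (p + q)`.
-/

open MeasureTheory

/-- The branch interval `B(k,ξ)` of the even-continued-fraction map. -/
noncomputable def Bset (k : ℕ) (ξ : ℤ) : Set ℝ :=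
  if ξ = 1 then Set.Ioc (1 / (2 * (k:ℝ) + 1)) (1 / (2 * (k:ℝ)))
  else Set.Ioc (1 / (2 * (k:ℝ))) (1 / (2 * (k:ℝ) - 1))

open Set

namespace EvenCF

def IsDigit (k : ℕ) (ε : ℤ) : Prop := 1 ≤ k ∧ (ε = 1 ∨ ε = -1)

-- The two branch formulas of the ECF map in one: on `Bset k ε`, `1 / α = 2k + ε T α`.
def IsEvenCFMap (T : ℝ → ℝ) : Prop :=
  ∀ k ε, IsDigit k ε → ∀ α ∈ Bset k ε, T α = ε * (1 / α - 2 * k)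

lemma Bset_one (k : ℕ) : Bset k 1 = Ioc (1 / (2 * (k:ℝ) + 1)) (1 / (2 * k)) := if_pos rfl

lemma Bset_neg_one (k : ℕ) : Bset k (-1) = Ioc (1 / (2 * (k:ℝ))) (1 / (2 * k - 1)) :=
  if_neg (by decide)

lemma isEvenCFMap_of_branches {T : ℝ → ℝ}
    (hT1 : ∀ k : ℕ, 1 ≤ k → ∀ α ∈ Ioc (1 / (2 * (k:ℝ))) (1 / (2 * (k:ℝ) - 1)),
      T α = 2 * (k:ℝ) - 1 / α)
    (hT2 : ∀ k : ℕ, 1 ≤ k → ∀ α ∈ Ioc (1 / (2 * (k:ℝ) + 1)) (1 / (2 * (k:ℝ))),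
      T α = 1 / α - 2 * (k:ℝ)) :
    IsEvenCFMap T := by
  rintro k ε ⟨hk, rfl | rfl⟩ α hα
  · rw [Bset_one] at hα
    simp [hT2 k hk α hα]
  · rw [Bset_neg_one] at hα
    simp [hT1 k hk α hα]

namespace IsDigit

variable {k : ℕ} {ε : ℤ}

lemma one_le_two_mul_add (hd : IsDigit k ε) {x : ℝ} (hx : x ∈ Icc 0 1) :
    1 ≤ 2 * (k:ℝ) + ε * x := by
  have hk : (1:ℝ) ≤ k := mod_cast hd.1
  obtain ⟨-, rfl | rfl⟩ := hd <;> push_cast <;> linarith [hx.1, hx.2]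

lemma one_lt_two_mul_add (hd : IsDigit k ε) {x : ℝ} (hx : x ∈ Ioo 0 1) :
    1 < 2 * (k:ℝ) + ε * x := by
  have hk : (1:ℝ) ≤ k := mod_cast hd.1
  obtain ⟨-, rfl | rfl⟩ := hd <;> push_cast <;> linarith [hx.1, hx.2]

lemma one_div_mem_Bset (hd : IsDigit k ε) {x : ℝ} (hx : x ∈ Ioo 0 1) :
    1 / (2 * (k:ℝ) + ε * x) ∈ Bset k ε := by
  have hk : (1:ℝ) ≤ k := mod_cast hd.1
  obtain ⟨hx₀, hx₁⟩ := hx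
  obtain ⟨-, rfl | rfl⟩ := hd <;> [rw [Bset_one]; rw [Bset_neg_one]] <;> push_cast <;>
    exact ⟨one_div_lt_one_div_of_lt (by linarith) (by linarith),
      one_div_le_one_div_of_le (by linarith) (by linarith)⟩

lemma mem_Icc_of_mem_Bset (hd : IsDigit k ε) {α : ℝ} (hα : α ∈ Bset k ε) :
    ε * (1 / α - 2 * k) ∈ Icc (0:ℝ) 1 := by
  have hk : (1:ℝ) ≤ k := mod_cast hd.1
  obtain ⟨-, rfl | rfl⟩ := hd <;> [rw [Bset_one] at hα; rw [Bset_neg_one] at hα] <;>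
  · obtain ⟨h₁, h₂⟩ := hα
    have hα₀ : 0 < α := lt_trans (by positivity) h₁
    have := one_div_le_one_div_of_le hα₀ h₂
    have := one_div_lt_one_div_of_lt (by positivity) h₁
    rw [one_div_one_div] at *
    push_cast
    constructor <;> linarith

end IsDigit

namespace IsEvenCFMap

variable {T : ℝ → ℝ} {k : ℕ} {ε : ℤ}

lemma apply_one_div (hT : IsEvenCFMap T) (hd : IsDigit k ε) {x : ℝ} (hx : x ∈ Ioo 0 1) :
    T (1 / (2 * k + ε * x)) = x := by
  rw [hT k ε hd _ (hd.one_div_mem_Bset hx), one_div_one_div]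
  obtain ⟨-, rfl | rfl⟩ := hd <;> push_cast <;> ring

lemma mem_Icc_of_mem_Bset (hT : IsEvenCFMap T) (hd : IsDigit k ε) {α : ℝ}
    (hα : α ∈ Bset k ε) : T α ∈ Icc 0 1 := by
  rw [hT k ε hd α hα]
  exact hd.mem_Icc_of_mem_Bset hα

lemma one_div_apply (hT : IsEvenCFMap T) (hd : IsDigit k ε) {α : ℝ} (hα : α ∈ Bset k ε) :
    1 / (2 * k + ε * T α) = α := by
  rw [hT k ε hd α hα]
  obtain ⟨-, rfl | rfl⟩ := hd <;> simp

end IsEvenCFMap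

def FollowsDigits (T : ℝ → ℝ) : List (ℕ × ℤ) → ℝ → Prop
  | [], _ => True
  | p :: L, α => α ∈ Bset p.1 p.2 ∧ FollowsDigits T L (T α)

def digitCylinder (T : ℝ → ℝ) (L : List (ℕ × ℤ)) : Set ℝ := Ioc 0 1 ∩ {α | FollowsDigits T L α}

noncomputable def inverseBranch : List (ℕ × ℤ) → ℝ → ℝ
  | [], y => y
  | p :: L, y => 1 / (2 * p.1 + p.2 * inverseBranch L y)

section InverseBranch

variable {T : ℝ → ℝ} {L : List (ℕ × ℤ)}

lemma inverseBranch_mem_Icc (hL : ∀ p ∈ L, IsDigit p.1 p.2) {y : ℝ} (hy : y ∈ Icc 0 1) :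
    inverseBranch L y ∈ Icc 0 1 := by
  induction L with
  | nil => exact hy
  | cons p L ih =>
    obtain ⟨hd, hL⟩ := List.forall_mem_cons.1 hL
    have := hd.one_le_two_mul_add (ih hL)
    exact ⟨by rw [inverseBranch]; positivity, (div_le_one (by linarith)).2 this⟩

lemma inverseBranch_mem_Ioo (hL : ∀ p ∈ L, IsDigit p.1 p.2) {y : ℝ} (hy : y ∈ Ioo 0 1) :
    inverseBranch L y ∈ Ioo 0 1 := by
  induction L with
  | nil => exact hy
  | cons p L ih =>
    obtain ⟨hd, hL⟩ := List.forall_mem_cons.1 hL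
    have := hd.one_lt_two_mul_add (ih hL)
    exact ⟨by rw [inverseBranch]; positivity, (div_lt_one (by linarith)).2 this⟩

lemma followsDigits_inverseBranch (hT : IsEvenCFMap T) (hL : ∀ p ∈ L, IsDigit p.1 p.2) {y : ℝ}
    (hy : y ∈ Ioo 0 1) : FollowsDigits T L (inverseBranch L y) := by
  induction L with
  | nil => trivial
  | cons p L ih =>
    obtain ⟨hd, hL⟩ := List.forall_mem_cons.1 hL
    have hz := inverseBranch_mem_Ioo hL hy
    refine ⟨hd.one_div_mem_Bset hz, ?_⟩
    rw [inverseBranch, hT.apply_one_div hd hz]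
    exact ih hL

lemma iterate_length_mem_Icc (hT : IsEvenCFMap T) (hL : ∀ p ∈ L, IsDigit p.1 p.2) {α : ℝ}
    (hα : α ∈ Icc 0 1) (hfollow : FollowsDigits T L α) : T^[L.length] α ∈ Icc 0 1 := by
  induction L generalizing α with
  | nil => exact hα
  | cons p L ih =>
    obtain ⟨hd, hL⟩ := List.forall_mem_cons.1 hL
    exact ih hL (hT.mem_Icc_of_mem_Bset hd hfollow.1) hfollow.2

lemma inverseBranch_iterate_length (hT : IsEvenCFMap T) (hL : ∀ p ∈ L, IsDigit p.1 p.2) {α : ℝ}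
    (hfollow : FollowsDigits T L α) : inverseBranch L (T^[L.length] α) = α := by
  induction L generalizing α with
  | nil => rfl
  | cons p L ih =>
    obtain ⟨hd, hL⟩ := List.forall_mem_cons.1 hL
    rw [List.length_cons, Function.iterate_succ_apply, inverseBranch, ih hL hfollow.2,
      hT.one_div_apply hd hfollow.1]

end InverseBranch

noncomputable def mobius (M : Matrix (Fin 2) (Fin 2) ℝ) (y : ℝ) : ℝ :=
  (M 0 0 * y + M 0 1) / (M 1 0 * y + M 1 1)

section Mobius

variable {M : Matrix (Fin 2) (Fin 2) ℝ}

-- `mobius M y` is the mediant of `mobius M 0 = M₀₁ / M₁₁` and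
-- `mobius M 1 = (M₀₀ + M₀₁) / (M₁₀ + M₁₁)` with weights `(1 - y) M₁₁` and `y (M₁₀ + M₁₁)`.
lemma mobius_mem_uIcc (h0 : 0 < M 1 1) (h1 : 0 < M 1 0 + M 1 1) {y : ℝ} (hy : y ∈ Icc 0 1) :
    mobius M y ∈ uIcc (mobius M 0) (mobius M 1) := by
  rw [← segment_eq_uIcc, mem_segment_iff_div]
  obtain ⟨hy0, hy1⟩ := hy
  have hpos : 0 < M 1 0 * y + M 1 1 := by
    rcases hy1.lt_or_eq with hy1 | rfl
    · nlinarith [mul_pos (sub_pos.2 hy1) h0, mul_nonneg hy0 h1.le]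
    · linarith
  refine ⟨(1 - y) * M 1 1, y * (M 1 0 + M 1 1), by nlinarith, by nlinarith, by linarith, ?_⟩
  simp only [mobius, smul_eq_mul, mul_zero, zero_add, mul_one]
  field_simp
  ring

lemma mobius_one_sub_mobius_zero (h0 : M 1 1 ≠ 0) (h1 : M 1 0 + M 1 1 ≠ 0) :
    mobius M 1 - mobius M 0 = M.det / (M 1 1 * (M 1 0 + M 1 1)) := by
  simp only [mobius, Matrix.det_fin_two, mul_zero, zero_add, mul_one]
  field_simp
  ring

end Mobius

def digitMatrix (k : ℕ) (ε : ℤ) : Matrix (Fin 2) (Fin 2) ℝ := !![0, 1; (ε : ℝ), 2 * k]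

lemma denom_digitMatrix_mul {M : Matrix (Fin 2) (Fin 2) ℝ} {y : ℝ} (hM : M 1 0 * y + M 1 1 ≠ 0)
    (k : ℕ) (ε : ℤ) :
    (digitMatrix k ε * M) 1 0 * y + (digitMatrix k ε * M) 1 1 =
      (2 * k + ε * mobius M y) * (M 1 0 * y + M 1 1) := by
  simp only [digitMatrix, mobius, Matrix.mul_apply, Fin.sum_univ_two, Matrix.of_apply,
    Matrix.cons_val', Matrix.cons_val_zero, Matrix.cons_val_one, Matrix.cons_val_fin_one]
  field_simp
  ring

lemma mobius_digitMatrix_mul {M : Matrix (Fin 2) (Fin 2) ℝ} {y : ℝ} (hM : M 1 0 * y + M 1 1 ≠ 0)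
    (k : ℕ) (ε : ℤ) :
    mobius (digitMatrix k ε * M) y = 1 / (2 * k + ε * mobius M y) := by
  have hnum : (digitMatrix k ε * M) 0 0 * y + (digitMatrix k ε * M) 0 1 = M 1 0 * y + M 1 1 := by
    simp [digitMatrix, Matrix.mul_apply]
  rw [mobius, hnum, denom_digitMatrix_mul hM, div_mul_cancel_right₀ hM, one_div]

noncomputable def wordMatrix (L : List (ℕ × ℤ)) : Matrix (Fin 2) (Fin 2) ℝ :=
  (L.map fun p => digitMatrix p.1 p.2).prod

lemma wordMatrix_cons (p : ℕ × ℤ) (L : List (ℕ × ℤ)) :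
    wordMatrix (p :: L) = digitMatrix p.1 p.2 * wordMatrix L := by
  simp [wordMatrix]

lemma wordMatrix_append (L L' : List (ℕ × ℤ)) :
    wordMatrix (L ++ L') = wordMatrix L * wordMatrix L' := by
  simp [wordMatrix]

section WordMatrix

variable {L : List (ℕ × ℤ)}

lemma abs_det_wordMatrix (hL : ∀ p ∈ L, IsDigit p.1 p.2) : |(wordMatrix L).det| = 1 := by
  induction L with
  | nil => simp [wordMatrix]
  | cons p L ih =>
    obtain ⟨⟨-, hε⟩, hL⟩ := List.forall_mem_cons.1 hL
    rw [wordMatrix_cons, Matrix.det_mul, abs_mul, ih hL, digitMatrix, Matrix.det_fin_two_of]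
    rcases hε with hε | hε <;> simp [hε]

lemma inverseBranch_eq_mobius (hL : ∀ p ∈ L, IsDigit p.1 p.2) {y : ℝ} (hy : y ∈ Icc 0 1) :
    0 < wordMatrix L 1 0 * y + wordMatrix L 1 1 ∧ inverseBranch L y = mobius (wordMatrix L) y := by
  induction L with
  | nil => simp [wordMatrix, mobius, inverseBranch]
  | cons p L ih =>
    obtain ⟨hd, hL⟩ := List.forall_mem_cons.1 hL
    obtain ⟨hden, heq⟩ := ih hL
    have hpos := hd.one_le_two_mul_add (inverseBranch_mem_Icc hL hy)
    rw [heq] at hpos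
    rw [wordMatrix_cons, denom_digitMatrix_mul hden.ne', mobius_digitMatrix_mul hden.ne',
      inverseBranch, heq]
    exact ⟨mul_pos (by linarith) hden, rfl⟩

end WordMatrix

lemma volume_eq_of_image_Ioo_subset {f : ℝ → ℝ} {a b : ℝ} {C : Set ℝ} (hab : a ≤ b)
    (hf : ContinuousOn f (Icc a b)) (hlo : f '' Ioo a b ⊆ C) (hup : C ⊆ uIcc (f a) (f b)) :
    volume C = ENNReal.ofReal |f b - f a| := by
  have hIoo : uIoo (f a) (f b) ⊆ f '' Ioo a b := by
    rcases le_total (f a) (f b) with h | h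
    · simpa [uIoo, h] using intermediate_value_Ioo hab hf
    · simpa [uIoo, h] using intermediate_value_Ioo' hab hf
  refine le_antisymm ((measure_mono hup).trans_eq Real.volume_interval) ?_
  rw [← Real.volume_uIoo]
  exact measure_mono (hIoo.trans hlo)

lemma volume_digitCylinder {T : ℝ → ℝ} (hT : IsEvenCFMap T) {L : List (ℕ × ℤ)}
    (hL : ∀ p ∈ L, IsDigit p.1 p.2) :
    volume (digitCylinder T L) =
      ENNReal.ofReal (1 / (wordMatrix L 1 1 * (wordMatrix L 1 0 + wordMatrix L 1 1))) := by
  set M := wordMatrix L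
  have hmob := fun y (hy : y ∈ Icc (0:ℝ) 1) => inverseBranch_eq_mobius hL hy
  have h0 : 0 < M 1 1 := by simpa using (hmob 0 (by simp)).1
  have h1 : 0 < M 1 0 + M 1 1 := by simpa using (hmob 1 (by simp)).1
  have hcont : ContinuousOn (inverseBranch L) (Icc 0 1) := by
    refine ContinuousOn.congr ?_ fun y hy => (hmob y hy).2
    exact ContinuousOn.div (by fun_prop) (by fun_prop) fun y hy => (hmob y hy).1.ne'
  have hlo : inverseBranch L '' Ioo 0 1 ⊆ digitCylinder T L := by
    rintro _ ⟨y, hy, rfl⟩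
    exact ⟨Ioo_subset_Ioc_self (inverseBranch_mem_Ioo hL hy), followsDigits_inverseBranch hT hL hy⟩
  have hup : digitCylinder T L ⊆ uIcc (inverseBranch L 0) (inverseBranch L 1) := by
    rintro α ⟨hα, hfollow⟩
    have hmem := iterate_length_mem_Icc hT hL (Ioc_subset_Icc_self hα) hfollow
    rw [← inverseBranch_iterate_length hT hL hfollow, (hmob _ hmem).2, (hmob 0 (by simp)).2,
      (hmob 1 (by simp)).2]
    exact mobius_mem_uIcc h0 h1 hmem
  rw [volume_eq_of_image_Ioo_subset zero_le_one hcont hlo hup, (hmob 0 (by simp)).2,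
    (hmob 1 (by simp)).2, mobius_one_sub_mobius_zero h0.ne' h1.ne', abs_div, abs_det_wordMatrix hL,
    abs_of_pos (mul_pos h0 h1)]

def sigmaBlock (h m : ℕ) (ζ : ℤ) : List (ℕ × ℤ) := List.replicate h (1, -1) ++ [(m, ζ)]

def sigmaWord (h m : ℕ → ℕ) (ζ : ℕ → ℤ) : ℕ → List (ℕ × ℤ)
  | 0 => []
  | n + 1 => sigmaWord h m ζ n ++ sigmaBlock (h (n + 1)) (m (n + 1)) (ζ (n + 1))

section SigmaWords

variable {T : ℝ → ℝ}

lemma followsDigits_append (L L' : List (ℕ × ℤ)) (α : ℝ) :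
    FollowsDigits T (L ++ L') α ↔ FollowsDigits T L α ∧ FollowsDigits T L' (T^[L.length] α) := by
  induction L generalizing α with
  | nil => simp [FollowsDigits]
  | cons p L ih => simp [FollowsDigits, ih, and_assoc]

lemma followsDigits_replicate (h : ℕ) (p : ℕ × ℤ) (α : ℝ) :
    FollowsDigits T (List.replicate h p) α ↔ ∀ i < h, T^[i] α ∈ Bset p.1 p.2 := by
  induction h generalizing α with
  | zero => simp [FollowsDigits]
  | succ h ih =>
    simp only [List.replicate_succ, FollowsDigits, ih, Nat.forall_lt_succ_left,
      Function.iterate_succ_apply, Function.iterate_zero_apply]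

lemma followsDigits_append_sigmaBlock (L : List (ℕ × ℤ)) (h m : ℕ) (ζ : ℤ) (α : ℝ) :
    FollowsDigits T (L ++ sigmaBlock h m ζ) α ↔ FollowsDigits T L α ∧
      (∀ i, L.length + 1 ≤ i → i ≤ L.length + h → T^[i - 1] α ∈ Bset 1 (-1)) ∧
      T^[L.length + h] α ∈ Bset m ζ := by
  simp only [sigmaBlock, followsDigits_append, followsDigits_replicate, List.length_replicate,
    FollowsDigits, and_true, ← Function.iterate_add_apply]
  rw [Nat.add_comm h]
  refine and_congr_right' (and_congr_left' ⟨fun H i hi₁ hi₂ => ?_, fun H i hi => ?_⟩)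
  · simpa [show i - 1 - L.length + L.length = i - 1 by omega] using H (i - 1 - L.length) (by omega)
  · simpa using H (i + L.length + 1) (by omega) (by omega)

lemma isDigit_of_mem_sigmaBlock {h m : ℕ} {ζ : ℤ} (hd : IsDigit m ζ) :
    ∀ p ∈ sigmaBlock h m ζ, IsDigit p.1 p.2 := by
  intro p hp
  simp only [sigmaBlock, List.mem_append, List.mem_replicate, List.mem_singleton] at hp
  rcases hp with ⟨-, rfl⟩ | rfl
  · exact ⟨le_rfl, Or.inr rfl⟩
  · exact hd

variable {h m : ℕ → ℕ} {ζ : ℕ → ℤ}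

lemma length_sigmaWord (n : ℕ) :
    (sigmaWord h m ζ n).length = ∑ i ∈ Finset.range n, h (i + 1) + n := by
  induction n with
  | zero => rfl
  | succ n ih =>
    simp only [sigmaWord, sigmaBlock, List.length_append, List.length_replicate, ih,
      Finset.sum_range_succ, List.length_singleton]
    ring

lemma isDigit_of_mem_sigmaWord (hd : ∀ j, IsDigit (m j) (ζ j)) (n : ℕ) :
    ∀ p ∈ sigmaWord h m ζ n, IsDigit p.1 p.2 := by
  induction n with
  | zero => simp [sigmaWord]
  | succ n ih =>
    simp only [sigmaWord, List.forall_mem_append]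
    exact ⟨ih, isDigit_of_mem_sigmaBlock (hd _)⟩

lemma followsDigits_sigmaWord_iff {ν : ℕ → ℕ}
    (hν : ∀ j, ν j = (∑ i ∈ Finset.range j, h (i + 1)) + j + 1) (n : ℕ) (α : ℝ) :
    (∀ j, 1 ≤ j → j ≤ n →
      (∀ i, ν (j - 1) ≤ i → i ≤ ν j - 2 → T^[i - 1] α ∈ Bset 1 (-1)) ∧
      T^[ν j - 2] α ∈ Bset (m j) (ζ j)) ↔ FollowsDigits T (sigmaWord h m ζ n) α := by
  have hν' : ∀ j, ν j = (sigmaWord h m ζ j).length + 1 := fun j => by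
    rw [hν, length_sigmaWord]
  induction n with
  | zero => exact iff_of_true (fun j hj₁ hj₂ => by omega) trivial
  | succ n ih =>
    have hlast : ν (n + 1) - 2 = (sigmaWord h m ζ n).length + h (n + 1) := by
      simp only [hν', sigmaWord, sigmaBlock, List.length_append, List.length_replicate,
        List.length_singleton]
      omega
    have hfirst : ν (n + 1 - 1) = (sigmaWord h m ζ n).length + 1 := hν' n
    rw [sigmaWord, followsDigits_append_sigmaBlock, ← hlast, ← hfirst]
    constructor
    · intro H
      exact ⟨ih.1 fun j hj₁ hj₂ => H j hj₁ (by omega), H (n + 1) (by omega) le_rfl⟩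
    · rintro ⟨H, Hlast⟩ j hj₁ hj₂
      rcases Nat.lt_or_ge j (n + 1) with hj | hj
      · exact ih.2 H j hj₁ (by omega)
      · obtain rfl : j = n + 1 := by omega
        exact Hlast

end SigmaWords

lemma wordMatrix_replicate (h : ℕ) :
    wordMatrix (List.replicate h (1, -1)) = !![1 - (h : ℝ), h; -h, h + 1] := by
  induction h with
  | zero => simp [wordMatrix, Matrix.one_fin_two]
  | succ h ih =>
    rw [List.replicate_succ, wordMatrix_cons, ih, digitMatrix, Matrix.mul_fin_two]
    push_cast
    ring_nf

lemma wordMatrix_sigmaBlock (h m : ℕ) (ζ : ℤ) :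
    wordMatrix (sigmaBlock h m ζ) =
      !![(h : ℝ) * ζ, 1 - h + 2 * m * h; (h + 1) * ζ, 2 * m * (h + 1) - h] := by
  rw [sigmaBlock, wordMatrix_append, wordMatrix_replicate, wordMatrix_cons, wordMatrix,
    List.map_nil, List.prod_nil, mul_one, digitMatrix, Matrix.mul_fin_two]
  ring_nf

lemma mul_wordMatrix_sigmaBlock_one_zero (M : Matrix (Fin 2) (Fin 2) ℝ) (h m : ℕ) (ζ : ℤ) :
    (M * wordMatrix (sigmaBlock h m ζ)) 1 0 = ζ * (h * (M 1 0 + M 1 1) + M 1 1) := by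
  simp only [wordMatrix_sigmaBlock, Matrix.mul_apply, Fin.sum_univ_two, Matrix.of_apply,
    Matrix.cons_val', Matrix.cons_val_zero, Matrix.cons_val_one, Matrix.cons_val_fin_one]
  ring

lemma mul_wordMatrix_sigmaBlock_one_one (M : Matrix (Fin 2) (Fin 2) ℝ) (h m : ℕ) (ζ : ℤ) :
    (M * wordMatrix (sigmaBlock h m ζ)) 1 1 =
      (2 * m - 1) * (h * (M 1 0 + M 1 1) + M 1 1) + (M 1 0 + M 1 1) := by
  simp only [wordMatrix_sigmaBlock, Matrix.mul_apply, Fin.sum_univ_two, Matrix.of_apply,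
    Matrix.cons_val', Matrix.cons_val_zero, Matrix.cons_val_one, Matrix.cons_val_fin_one]
  ring

def IsAdmissible (m : ℕ) (ζ : ℤ) : Prop := IsDigit m ζ ∧ ¬(m = 1 ∧ ζ = -1)

lemma IsAdmissible.cast_cases {m : ℕ} {ζ : ℤ} (hadm : IsAdmissible m ζ) :
    ((ζ : ℝ) = 1 ∧ (1 : ℝ) ≤ m) ∨ ((ζ : ℝ) = -1 ∧ (2 : ℝ) ≤ m) := by
  obtain ⟨⟨hm, rfl | rfl⟩, hne⟩ := hadm
  · exact Or.inl ⟨by simp, mod_cast hm⟩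
  · exact Or.inr ⟨by simp, mod_cast (by omega : 2 ≤ m)⟩

-- Of the three inequalities, only `-d ≤ 3 c` needs the Σ-block not to end in `(1, -1)`.
def IsBoundaryRow (c d : ℝ) : Prop := 0 < d ∧ c ≤ d ∧ -d ≤ 3 * c

lemma IsBoundaryRow.next {c d A : ℝ} (hcd : IsBoundaryRow c d) (h : ℕ) {m : ℕ} {ζ : ℤ}
    (hadm : IsAdmissible m ζ) (hA : A = h * (c + d) + d) :
    IsBoundaryRow (ζ * A) ((2 * m - 1) * A + (c + d)) := by
  obtain ⟨hd, hcd, hdc⟩ := hcd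
  have hA0 : 0 < A := by rw [hA]; nlinarith [(h.cast_nonneg : (0:ℝ) ≤ h)]
  rcases hadm.cast_cases with ⟨hζ, hm⟩ | ⟨hζ, hm⟩ <;> rw [hζ] <;>
    refine ⟨by nlinarith, by nlinarith, by nlinarith⟩

lemma IsBoundaryRow.sq_bounds {c d A s : ℝ} (hcd : IsBoundaryRow c d) (hs : 0 ≤ s)
    (hA : A = s * (c + d) + d) :
    (s + 1) ^ 2 * (d * (c + d)) ≤ 6 * A ^ 2 ∧ 2 * A ^ 2 ≤ 5 * (s + 1) ^ 2 * (d * (c + d)) := by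
  obtain ⟨hd, hcd, hdc⟩ := hcd
  have hP : 0 ≤ c + d := by linarith
  have hsPd := mul_nonneg (mul_nonneg hs hP) hd.le
  subst hA
  constructor
  · nlinarith [mul_nonneg (mul_nonneg (sq_nonneg s) hP) (by linarith : 0 ≤ 6 * (c + d) - d),
      mul_nonneg hd.le (by linarith : 0 ≤ 6 * d - (c + d))]
  · nlinarith [mul_nonneg (mul_nonneg (sq_nonneg s) hP) (by linarith : 0 ≤ 5 * d - 2 * (c + d)),
      mul_nonneg hd.le (by linarith : 0 ≤ 5 * (c + d) - 2 * d)]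

lemma IsBoundaryRow.mul_add_pos {c d : ℝ} (hcd : IsBoundaryRow c d) : 0 < d * (c + d) := by
  obtain ⟨hd, -, hdc⟩ := hcd
  exact mul_pos hd (by linarith)

lemma IsBoundaryRow.denominator_bounds {c d A : ℝ} (hcd : IsBoundaryRow c d) (s : ℕ) {t : ℕ}
    {ζ : ℤ} (hadm : IsAdmissible t ζ) (hA : A = s * (c + d) + d) :
    let d' := (2 * t - 1) * A + (c + d)
    ((s : ℝ) + 1) ^ 2 * t ^ 2 * (d * (c + d)) ≤ 6 * (d' * (ζ * A + d')) ∧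
      d' * (ζ * A + d') ≤ 30 * ((s : ℝ) + 1) ^ 2 * t ^ 2 * (d * (c + d)) := by
  intro d'
  obtain ⟨key₁, key₂⟩ := hcd.sq_bounds s.cast_nonneg hA
  obtain ⟨hd, hcd', hdc⟩ := hcd
  have hA0 : 0 < A := by rw [hA]; nlinarith [(s.cast_nonneg : (0:ℝ) ≤ s)]
  have hPA : c + d ≤ 2 * A := by rw [hA]; nlinarith [(s.cast_nonneg : (0:ℝ) ≤ s)]
  have ht : (1 : ℝ) ≤ t := by rcases hadm.cast_cases with ⟨-, ht⟩ | ⟨-, ht⟩ <;> linarith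
  have hlo : t * A ≤ d' ∧ t * A ≤ ζ * A + d' := by
    rcases hadm.cast_cases with ⟨hζ, -⟩ | ⟨hζ, ht2⟩ <;> rw [hζ] <;>
      constructor <;> nlinarith
  have hup : d' ≤ (2 * t + 1) * A ∧ ζ * A + d' ≤ (2 * t + 2) * A := by
    rcases hadm.cast_cases with ⟨hζ, -⟩ | ⟨hζ, -⟩ <;> rw [hζ] <;> constructor <;> linarith
  have htA : 0 ≤ t * A := by positivity
  constructor
  · calc ((s : ℝ) + 1) ^ 2 * t ^ 2 * (d * (c + d)) ≤ 6 * (t * A) ^ 2 := by nlinarith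
      _ ≤ 6 * (d' * (ζ * A + d')) := by nlinarith [mul_le_mul hlo.1 hlo.2 htA (htA.trans hlo.1)]
  · calc d' * (ζ * A + d') ≤ ((2 * t + 1) * A) * ((2 * t + 2) * A) :=
          mul_le_mul hup.1 hup.2 (htA.trans hlo.2) (by positivity)
      _ ≤ 12 * t ^ 2 * A ^ 2 := by nlinarith [mul_nonneg (sub_nonneg.2 ht) (sq_nonneg A)]
      _ ≤ 30 * ((s : ℝ) + 1) ^ 2 * t ^ 2 * (d * (c + d)) := by nlinarith

lemma isBoundaryRow_sigmaWord {h m : ℕ → ℕ} {ζ : ℕ → ℤ} (hadm : ∀ j, IsAdmissible (m j) (ζ j))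
    (n : ℕ) :
    IsBoundaryRow (wordMatrix (sigmaWord h m ζ n) 1 0) (wordMatrix (sigmaWord h m ζ n) 1 1) := by
  induction n with
  | zero => simp [IsBoundaryRow, sigmaWord, wordMatrix]
  | succ n ih =>
    rw [sigmaWord, wordMatrix_append, mul_wordMatrix_sigmaBlock_one_zero,
      mul_wordMatrix_sigmaBlock_one_one]
    exact ih.next _ (hadm _) rfl

lemma volume_digitCylinder_append_sigmaBlock {T : ℝ → ℝ} (hT : IsEvenCFMap T) {L : List (ℕ × ℤ)}
    (hL : ∀ p ∈ L, IsDigit p.1 p.2) (hrow : IsBoundaryRow (wordMatrix L 1 0) (wordMatrix L 1 1))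
    (s : ℕ) {t : ℕ} {ζ : ℤ} (hadm : IsAdmissible t ζ) :
    ENNReal.ofReal (1 / (30 * ((s:ℝ) + 1) ^ 2 * (t:ℝ) ^ 2)) * volume (digitCylinder T L) ≤
      volume (digitCylinder T (L ++ sigmaBlock s t ζ)) ∧
    volume (digitCylinder T (L ++ sigmaBlock s t ζ)) ≤
      ENNReal.ofReal (6 / (((s:ℝ) + 1) ^ 2 * (t:ℝ) ^ 2)) * volume (digitCylinder T L) := by
  have hL' : ∀ p ∈ L ++ sigmaBlock s t ζ, IsDigit p.1 p.2 :=
    List.forall_mem_append.2 ⟨hL, isDigit_of_mem_sigmaBlock hadm.1⟩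
  have hrow' := hrow.next s hadm rfl
  obtain ⟨hup, hlo⟩ := hrow.denominator_bounds s hadm rfl
  rw [volume_digitCylinder hT hL, volume_digitCylinder hT hL', wordMatrix_append,
    mul_wordMatrix_sigmaBlock_one_zero, mul_wordMatrix_sigmaBlock_one_one,
    ← ENNReal.ofReal_mul (by positivity), ← ENNReal.ofReal_mul (by positivity)]
  have ht : (0 : ℝ) < t := by exact_mod_cast hadm.1.1
  have hpos := hrow.mul_add_pos
  have hpos' := hrow'.mul_add_pos
  constructor <;> apply ENNReal.ofReal_le_ofReal
  · rw [one_div_mul_one_div]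
    exact one_div_le_one_div_of_le hpos' (by linarith)
  · rw [div_mul_div_comm, mul_one, div_le_div_iff₀ hpos' (by positivity)]
    linarith

end EvenCF

open EvenCF

/-- Cylinder measure estimate: if `J_n` is the cylinder of `α ∈ (0,1]` with prescribed first
`n` Σ-entries `σ_j = (h_j, (m_j, ζ_j))` and `J_{n+1}[s·t^ζ]` the subcylinder where the
`(n+1)`-st Σ-entry is `(s,(t,ζ))`, then
`|J_n|/(30(s+1)²t²) ≤ |J_{n+1}[s·t^ζ]| ≤ 6|J_n|/((s+1)²t²)`. -/
theorem cylinder_ratio_bounds (T : ℝ → ℝ)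
    (hT1 : ∀ k : ℕ, 1 ≤ k → ∀ α ∈ Set.Ioc (1 / (2 * (k:ℝ))) (1 / (2 * (k:ℝ) - 1)),
      T α = 2 * (k:ℝ) - 1 / α)
    (hT2 : ∀ k : ℕ, 1 ≤ k → ∀ α ∈ Set.Ioc (1 / (2 * (k:ℝ) + 1)) (1 / (2 * (k:ℝ))),
      T α = 1 / α - 2 * (k:ℝ))
    (n : ℕ) (h m : ℕ → ℕ) (ζ : ℕ → ℤ) (ν : ℕ → ℕ)
    (hν : ∀ j, ν j = (∑ i ∈ Finset.range j, h (i + 1)) + j + 1)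
    (hm : ∀ j, 1 ≤ m j) (hζ : ∀ j, ζ j = 1 ∨ ζ j = -1)
    (hadm : ∀ j, ¬ (m j = 1 ∧ ζ j = -1))
    (s t : ℕ) (ζ' : ℤ) (ht : 1 ≤ t) (hζ' : ζ' = 1 ∨ ζ' = -1) (hne : ¬ (t = 1 ∧ ζ' = -1))
    (Jn Jn1 : Set ℝ)
    (hJn : Jn = Set.Ioc 0 1 ∩ {α : ℝ | ∀ j, 1 ≤ j → j ≤ n →
      (∀ i, ν (j - 1) ≤ i → i ≤ ν j - 2 → T^[i - 1] α ∈ Bset 1 (-1)) ∧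
      T^[ν j - 2] α ∈ Bset (m j) (ζ j)})
    (hJn1 : Jn1 = Jn ∩ {α : ℝ |
      (∀ i, ν n ≤ i → i ≤ ν n + s - 1 → T^[i - 1] α ∈ Bset 1 (-1)) ∧
      T^[ν n + s - 1] α ∈ Bset t ζ'}) :
    ENNReal.ofReal (1 / (30 * ((s:ℝ) + 1) ^ 2 * (t:ℝ) ^ 2)) * volume Jn ≤ volume Jn1 ∧
    volume Jn1 ≤ ENNReal.ofReal (6 / (((s:ℝ) + 1) ^ 2 * (t:ℝ) ^ 2)) * volume Jn := by
  have hT := isEvenCFMap_of_branches hT1 hT2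
  have hdig : ∀ j, IsDigit (m j) (ζ j) := fun j => ⟨hm j, hζ j⟩
  set L := sigmaWord h m ζ n
  have hJn' : Jn = digitCylinder T L := by
    rw [hJn, digitCylinder]
    simp only [followsDigits_sigmaWord_iff hν, L]
  have hνn : ν n = L.length + 1 := by rw [hν, length_sigmaWord]
  have hJn1' : Jn1 = digitCylinder T (L ++ sigmaBlock s t ζ') := by
    rw [hJn1, hJn', digitCylinder, digitCylinder, hνn, Nat.add_right_comm, Nat.add_sub_cancel]
    ext α
    simp only [mem_inter_iff, mem_ofPred_eq, followsDigits_append_sigmaBlock, and_assoc]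
  rw [hJn', hJn1']
  exact volume_digitCylinder_append_sigmaBlock hT (isDigit_of_mem_sigmaWord hdig n)
    (isBoundaryRow_sigmaWord (fun j => ⟨hdig j, hadm j⟩) n) s ⟨⟨ht, hζ'⟩, hne⟩
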